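/- Let n ≥ 1, let Pₙ be the path graph on vertices Δ = {α₁,…,αₙ}, and let J₀ ⊆ Δ. A nonempty admissible subset U ∈ Λ*(Pₙ,J₀) is join-irreducible in the lattice Λ*(Pₙ,J₀) if and only if one of the following holds: (a) U = {β} for a single vertex β ∈ Δ − J₀; or (b) U = A ∪ {β}, where β ∈ Δ − J₀, A is a nonempty connected subset of J₀, and there exists α ∈ A adjacent to β in Pₙ. -/

import Mathlib

/-!
On a path, `b` is reachable from `a ∈ U` inside `U` exactly when the whole interval between
`a` and `b` lies in `U`. A join-irreducible `U` cannot be written as the union of two smaller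
admissible sets: cutting it at a missing vertex shows that `U` is an interval, cutting just
after a vertex outside `J₀` shows that there is only one such vertex `β`, and cutting at `β`
shows that `β` is an endpoint of `U`; then `A = U \ {β}` is a connected subset of `J₀`.
Conversely, if `U` lies in the interval from some `e ∈ U` to its only vertex `β` outside
`J₀`, every admissible subset of `U` containing `e` must reach `β` from `e`, hence contains
`U`; so whichever of two joinands contains `e` is `U` itself.
-/

open SimpleGraph Finset

/-- `ReachIn G U a b` : `b` is reachable from `a` within the subgraph of `G`
induced on the vertex set `U`. -/
def ReachIn {n : ℕ} (G : SimpleGraph (Fin n)) (U : Finset (Fin n)) (a b : Fin n) : Prop :=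
  Relation.ReflTransGen (fun x y => G.Adj x y ∧ x ∈ U ∧ y ∈ U) a b

/-- `U` is admissible (with respect to `J₀`) if no connected component of the
subgraph of `G` induced on `U` is entirely contained in `J₀`: every component
contains a vertex outside `J₀`. -/
def Admissible {n : ℕ} (G : SimpleGraph (Fin n)) (J₀ U : Finset (Fin n)) : Prop :=
  ∀ a ∈ U, ∃ b, ReachIn G U a b ∧ b ∉ J₀

/-- A subset `A` is connected if the induced subgraph on `A` is connected. -/
def ConnIn {n : ℕ} (G : SimpleGraph (Fin n)) (A : Finset (Fin n)) : Prop :=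
  ∀ a ∈ A, ∀ b ∈ A, ReachIn G A a b

theorem ReachIn.mono {n : ℕ} {G : SimpleGraph (Fin n)} {U V : Finset (Fin n)} (h : U ⊆ V)
    {a b : Fin n} (hr : ReachIn G U a b) : ReachIn G V a b := by
  unfold ReachIn at hr ⊢
  exact hr.lift id (fun x y hxy => ⟨hxy.1, h hxy.2.1, h hxy.2.2⟩)

theorem admissible_empty {n : ℕ} (G : SimpleGraph (Fin n)) (J₀ : Finset (Fin n)) :
    Admissible G J₀ ∅ := fun a ha => absurd ha (Finset.notMem_empty a)

theorem admissible_union {n : ℕ} {G : SimpleGraph (Fin n)} {J₀ U V : Finset (Fin n)}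
    (hU : Admissible G J₀ U) (hV : Admissible G J₀ V) : Admissible G J₀ (U ∪ V) := by
  intro a ha
  rcases Finset.mem_union.mp ha with h | h
  · obtain ⟨b, hb, hbJ⟩ := hU a h
    exact ⟨b, hb.mono Finset.subset_union_left, hbJ⟩
  · obtain ⟨b, hb, hbJ⟩ := hV a h
    exact ⟨b, hb.mono Finset.subset_union_right, hbJ⟩

/-- `Λ*(G, J₀)` : the poset of admissible subsets, ordered by inclusion. -/
def CrossSection {n : ℕ} (G : SimpleGraph (Fin n)) (J₀ : Finset (Fin n)) : Type :=
  {U : Finset (Fin n) // Admissible G J₀ U}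

namespace CrossSection

variable {n : ℕ} {G : SimpleGraph (Fin n)} {J₀ : Finset (Fin n)}

instance : PartialOrder (CrossSection G J₀) :=
  inferInstanceAs (PartialOrder {U : Finset (Fin n) // Admissible G J₀ U})

instance : DecidableEq (CrossSection G J₀) :=
  inferInstanceAs (DecidableEq {U : Finset (Fin n) // Admissible G J₀ U})

noncomputable instance : Fintype (CrossSection G J₀) :=
  Fintype.ofInjective (Subtype.val : CrossSection G J₀ → Finset (Fin n)) Subtype.val_injective

open Classical in
/-- The underlying set of the meet of two admissible sets: the largest admissible
subset contained in the intersection. -/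
noncomputable def meetFinset (G : SimpleGraph (Fin n)) (J₀ : Finset (Fin n))
    (U V : Finset (Fin n)) : Finset (Fin n) :=
  ((U ∩ V).powerset.filter (fun W => Admissible G J₀ W)).sup id

theorem admissible_sup {s : Finset (Finset (Fin n))}
    (h : ∀ W ∈ s, Admissible G J₀ W) : Admissible G J₀ (s.sup id) :=
  Finset.sup_induction (by simpa using admissible_empty G J₀)
    (fun a ha b hb => by simpa using admissible_union ha hb) h

theorem admissible_meetFinset (G : SimpleGraph (Fin n)) (J₀ U V : Finset (Fin n)) :
    Admissible G J₀ (meetFinset G J₀ U V) := by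
  classical
  exact admissible_sup (fun W hW => (Finset.mem_filter.mp hW).2)

theorem meetFinset_subset_left (G : SimpleGraph (Fin n)) (J₀ U V : Finset (Fin n)) :
    meetFinset G J₀ U V ≤ U := by
  classical
  unfold meetFinset
  refine Finset.sup_le (fun W hW => ?_)
  have := Finset.mem_powerset.mp (Finset.mem_filter.mp hW).1
  exact fun x hx => (Finset.mem_inter.mp (this hx)).1

theorem meetFinset_subset_right (G : SimpleGraph (Fin n)) (J₀ U V : Finset (Fin n)) :
    meetFinset G J₀ U V ≤ V := by
  classical
  unfold meetFinset
  refine Finset.sup_le (fun W hW => ?_)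
  have := Finset.mem_powerset.mp (Finset.mem_filter.mp hW).1
  exact fun x hx => (Finset.mem_inter.mp (this hx)).2

theorem subset_meetFinset {G : SimpleGraph (Fin n)} {J₀ U V W : Finset (Fin n)}
    (hW : Admissible G J₀ W) (h1 : W ⊆ U) (h2 : W ⊆ V) : W ≤ meetFinset G J₀ U V := by
  classical
  unfold meetFinset
  exact Finset.le_sup (f := id)
    (Finset.mem_filter.mpr ⟨Finset.mem_powerset.mpr (Finset.subset_inter h1 h2), hW⟩)

noncomputable instance : Lattice (CrossSection G J₀) :=
  { (inferInstance : PartialOrder (CrossSection G J₀)) with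
    sup := fun U V => ⟨U.1 ∪ V.1, admissible_union U.2 V.2⟩
    le_sup_left := fun U V => show U.1 ⊆ U.1 ∪ V.1 from Finset.subset_union_left
    le_sup_right := fun U V => show V.1 ⊆ U.1 ∪ V.1 from Finset.subset_union_right
    sup_le := fun U V W h1 h2 => show U.1 ∪ V.1 ⊆ W.1 from Finset.union_subset h1 h2
    inf := fun U V => ⟨meetFinset G J₀ U.1 V.1, admissible_meetFinset G J₀ U.1 V.1⟩
    inf_le_left := fun U V => meetFinset_subset_left G J₀ U.1 V.1
    inf_le_right := fun U V => meetFinset_subset_right G J₀ U.1 V.1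
    le_inf := fun W U V h1 h2 => subset_meetFinset W.2 h1 h2 }

instance : OrderBot (CrossSection G J₀) where
  bot := ⟨∅, admissible_empty G J₀⟩
  bot_le := fun U => show (∅ : Finset (Fin n)) ⊆ U.1 from Finset.empty_subset _

@[simp] theorem sup_val (U V : CrossSection G J₀) : (U ⊔ V).1 = U.1 ∪ V.1 := rfl

@[simp] theorem inf_val (U V : CrossSection G J₀) : (U ⊓ V).1 = meetFinset G J₀ U.1 V.1 := rfl

end CrossSection


theorem Set.OrdConnected.diff_singleton {α : Type*} [PartialOrder α] {s : Set α} {b : α}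
    (hs : s.OrdConnected) (hb : b ∈ upperBounds s ∨ b ∈ lowerBounds s) :
    (s \ {b}).OrdConnected := by
  refine ⟨fun x hx y hy z hz => ⟨hs.out hx.1 hy.1 hz, fun hzb => ?_⟩⟩
  rw [Set.mem_singleton_iff] at hzb
  subst hzb
  rcases hb with hb | hb
  · exact hy.2 (le_antisymm (hb hy.1) hz.2)
  · exact hx.2 (le_antisymm hz.1 (hb hx.1))

theorem Finset.exists_mem_subset_uIcc_of_notMem {α : Type*} [LinearOrder α] {A : Finset α}
    (hA : A.Nonempty) (hconv : (A : Set α).OrdConnected) {b : α} (hb : b ∉ A) :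
    ∃ e ∈ A, (A : Set α) ⊆ Set.uIcc e b := by
  rcases lt_or_ge b (A.min' hA) with hmin | hmin
  · exact ⟨A.max' hA, A.max'_mem hA, fun z hz =>
      Set.Icc_subset_uIcc' ⟨hmin.le.trans (A.min'_le z hz), A.le_max' z hz⟩⟩
  · have hmax : A.max' hA < b := lt_of_not_ge fun hmax =>
      hb (hconv.out (A.min'_mem hA) (A.max'_mem hA) ⟨hmin, hmax⟩)
    exact ⟨A.min' hA, A.min'_mem hA, fun z hz =>
      Set.Icc_subset_uIcc ⟨A.min'_le z hz, (A.le_max' z hz).trans hmax.le⟩⟩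

section PathGraph

variable {n : ℕ} {J₀ U : Finset (Fin n)} {a b : Fin n}

theorem ReachIn.uIcc_subset (ha : a ∈ U) (h : ReachIn (pathGraph n) U a b) :
    Set.uIcc a b ⊆ U := by
  induction h with
  | refl => simpa using ha
  | @tail b c _ hbc ih =>
    intro z hz
    by_cases hzc : z = c
    · exact hzc ▸ hbc.2.2
    · apply ih
      have hadj := pathGraph_adj.mp hbc.1
      have hzc' : z.val ≠ c.val := Fin.val_ne_of_ne hzc
      simp only [Set.mem_uIcc, Fin.le_iff_val_le_val] at hz ⊢
      omega

theorem reachIn_of_uIcc_subset (h : Set.uIcc a b ⊆ U) : ReachIn (pathGraph n) U a b := by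
  have hstep : ∀ {x y}, Set.uIcc x y = Set.uIcc a b → ∀ i ∈ Set.Ico x y,
      (pathGraph n).Adj i (Order.succ i) ∧ i ∈ U ∧ Order.succ i ∈ U := by
    intro x y hxy i hi
    have hcov : i ⋖ Order.succ i := Order.covBy_succ_of_not_isMax (not_isMax_of_lt hi.2)
    refine ⟨hasse_adj.mpr (Or.inl hcov), h ?_, h ?_⟩ <;> rw [← hxy]
    · exact Set.Icc_subset_uIcc (Set.Ico_subset_Icc_self hi)
    · exact Set.Icc_subset_uIcc ⟨hi.1.trans hcov.le, Order.succ_le_of_lt hi.2⟩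
  exact reflTransGen_of_succ _ (hstep rfl) fun i hi =>
    have hi := hstep (Set.uIcc_comm b a) i hi
    ⟨hi.1.symm, hi.2.2, hi.2.1⟩

theorem connIn_pathGraph_iff {A : Finset (Fin n)} :
    ConnIn (pathGraph n) A ↔ (A : Set (Fin n)).OrdConnected := by
  refine ⟨fun h => ⟨fun x hx y hy => ?_⟩, fun h x hx y hy => ?_⟩
  · exact Set.Icc_subset_uIcc.trans (ReachIn.uIcc_subset hx (h x hx y hy))
  · exact reachIn_of_uIcc_subset (h.uIcc_subset hx hy)

theorem exists_mem_erase_adj_of_ordConnected (hU : (U : Set (Fin n)).OrdConnected)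
    (ha : a ∈ U) (hb : b ∈ U) (hab : a ≠ b) : ∃ c ∈ U.erase b, (pathGraph n).Adj c b := by
  obtain h | ⟨c, -, hcb, hc, -⟩ :=
    Relation.ReflTransGen.cases_tail (reachIn_of_uIcc_subset (hU.uIcc_subset ha hb))
  · exact absurd h.symm hab
  · exact ⟨c, Finset.mem_erase.mpr ⟨hcb.ne, hc⟩, hcb⟩

theorem admissible_of_ordConnected (hU : (U : Set (Fin n)).OrdConnected) (hb : b ∈ U)
    (hbJ : b ∉ J₀) : Admissible (pathGraph n) J₀ U :=
  fun _ ha => ⟨b, reachIn_of_uIcc_subset (hU.uIcc_subset ha hb), hbJ⟩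

theorem admissible_inter_of_ordConnected {S : Finset (Fin n)}
    (hU : (U : Set (Fin n)).OrdConnected) (hS : (S : Set (Fin n)).OrdConnected)
    (hbU : b ∈ U) (hbS : b ∈ S) (hbJ : b ∉ J₀) : Admissible (pathGraph n) J₀ (U ∩ S) :=
  admissible_of_ordConnected (by rw [Finset.coe_inter]; exact hU.inter hS)
    (Finset.mem_inter.mpr ⟨hbU, hbS⟩) hbJ

theorem Admissible.inter_Iio (hU : Admissible (pathGraph n) J₀ U) {c : Fin n} (hc : c ∉ U) :
    Admissible (pathGraph n) J₀ (U ∩ Finset.Iio c) := by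
  intro x hx
  rw [Finset.mem_inter, Finset.mem_Iio] at hx
  obtain ⟨y, hxy, hyJ⟩ := hU x hx.1
  have hsub := ReachIn.uIcc_subset hx.1 hxy
  have hyc : y < c := lt_of_not_ge fun hcy => hc (hsub (Set.mem_uIcc_of_le hx.2.le hcy))
  refine ⟨y, reachIn_of_uIcc_subset ?_, hyJ⟩
  rw [Finset.coe_inter, Finset.coe_Iio]
  exact Set.subset_inter hsub fun z hz => hz.2.trans_lt (max_lt hx.2 hyc)

theorem Admissible.inter_Ioi (hU : Admissible (pathGraph n) J₀ U) {c : Fin n} (hc : c ∉ U) :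
    Admissible (pathGraph n) J₀ (U ∩ Finset.Ioi c) := by
  intro x hx
  rw [Finset.mem_inter, Finset.mem_Ioi] at hx
  obtain ⟨y, hxy, hyJ⟩ := hU x hx.1
  have hsub := ReachIn.uIcc_subset hx.1 hxy
  have hyc : c < y := lt_of_not_ge fun hyc => hc (hsub (Set.mem_uIcc_of_ge hyc hx.2.le))
  refine ⟨y, reachIn_of_uIcc_subset ?_, hyJ⟩
  rw [Finset.coe_inter, Finset.coe_Ioi]
  exact Set.subset_inter hsub fun z hz => (lt_min hx.2 hyc).trans_le hz.1

end PathGraph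

namespace CrossSection

variable {n : ℕ} {G : SimpleGraph (Fin n)} {J₀ : Finset (Fin n)}

theorem subset_or_subset_of_supIrred {U : CrossSection G J₀} (hU : SupIrred U)
    {B C : Finset (Fin n)} (hB : Admissible G J₀ B) (hC : Admissible G J₀ C)
    (hBC : B ∪ C = U.1) : U.1 ⊆ B ∨ U.1 ⊆ C := by
  let B' : CrossSection G J₀ := ⟨B, hB⟩
  let C' : CrossSection G J₀ := ⟨C, hC⟩
  exact (hU.2 (show B' ⊔ C' = U from Subtype.ext hBC)).imp
    (fun h => (congrArg Subtype.val h).ge) (fun h => (congrArg Subtype.val h).ge)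

variable {U : CrossSection (pathGraph n) J₀}

theorem ordConnected_of_supIrred (hU : SupIrred U) : (U.1 : Set (Fin n)).OrdConnected := by
  refine ⟨fun a ha b hb c hc => ?_⟩
  by_contra hcU
  have hsplit : U.1 ∩ Finset.Iio c ∪ U.1 ∩ Finset.Ioi c = U.1 := by
    ext z
    simp only [Finset.mem_union, Finset.mem_inter, Finset.mem_Iio, Finset.mem_Ioi]
    exact ⟨by tauto, fun hz =>
      (lt_or_gt_of_ne (ne_of_mem_of_not_mem hz hcU)).imp (⟨hz, ·⟩) (⟨hz, ·⟩)⟩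
  rcases subset_or_subset_of_supIrred hU (U.2.inter_Iio hcU) (U.2.inter_Ioi hcU) hsplit
    with h | h
  · exact (Finset.mem_Iio.mp (Finset.mem_inter.mp (h hb)).2).not_ge hc.2
  · exact (Finset.mem_Ioi.mp (Finset.mem_inter.mp (h ha)).2).not_ge hc.1

theorem mem_upperBounds_or_mem_lowerBounds_of_supIrred (hU : SupIrred U) {b : Fin n}
    (hb : b ∈ U.1) (hbJ : b ∉ J₀) :
    b ∈ upperBounds (U.1 : Set (Fin n)) ∨ b ∈ lowerBounds (U.1 : Set (Fin n)) := by
  have hconv := ordConnected_of_supIrred hU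
  have hsplit : U.1 ∩ Finset.Iic b ∪ U.1 ∩ Finset.Ici b = U.1 := by
    ext z
    simp only [Finset.mem_union, Finset.mem_inter, Finset.mem_Iic, Finset.mem_Ici]
    exact ⟨by tauto, fun hz => (le_total z b).imp (⟨hz, ·⟩) (⟨hz, ·⟩)⟩
  have hIic := admissible_inter_of_ordConnected (S := Finset.Iic b) hconv
    (by simpa using Set.ordConnected_Iic) hb (Finset.mem_Iic.mpr le_rfl) hbJ
  have hIci := admissible_inter_of_ordConnected (S := Finset.Ici b) hconv
    (by simpa using Set.ordConnected_Ici) hb (Finset.mem_Ici.mpr le_rfl) hbJ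
  refine (subset_or_subset_of_supIrred hU hIic hIci hsplit).imp
    (fun h z hz => ?_) (fun h z hz => ?_)
  · exact Finset.mem_Iic.mp (Finset.mem_inter.mp (h hz)).2
  · exact Finset.mem_Ici.mp (Finset.mem_inter.mp (h hz)).2

theorem eq_of_supIrred (hU : SupIrred U) {a b : Fin n} (ha : a ∈ U.1) (hb : b ∈ U.1)
    (haJ : a ∉ J₀) (hbJ : b ∉ J₀) : a = b := by
  wlog hab : a ≤ b generalizing a b
  · exact (this hb ha hbJ haJ (le_of_not_ge hab)).symm
  refine hab.eq_of_not_lt fun hlt => ?_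
  have hconv := ordConnected_of_supIrred hU
  have hsplit : U.1 ∩ Finset.Iic a ∪ U.1 ∩ Finset.Ioi a = U.1 := by
    ext z
    simp only [Finset.mem_union, Finset.mem_inter, Finset.mem_Iic, Finset.mem_Ioi]
    exact ⟨by tauto, fun hz => (le_or_gt z a).imp (⟨hz, ·⟩) (⟨hz, ·⟩)⟩
  have hIic := admissible_inter_of_ordConnected (S := Finset.Iic a) hconv
    (by simpa using Set.ordConnected_Iic) ha (Finset.mem_Iic.mpr le_rfl) haJ
  have hIoi := admissible_inter_of_ordConnected (S := Finset.Ioi a) hconv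
    (by simpa using Set.ordConnected_Ioi) hb (Finset.mem_Ioi.mpr hlt) hbJ
  rcases subset_or_subset_of_supIrred hU hIic hIoi hsplit with h | h
  · exact (Finset.mem_Iic.mp (Finset.mem_inter.mp (h hb)).2).not_gt hlt
  · exact (Finset.mem_Ioi.mp (Finset.mem_inter.mp (h ha)).2).false

theorem erase_subset_of_supIrred (hU : SupIrred U) {b : Fin n} (hb : b ∈ U.1)
    (hbJ : b ∉ J₀) : U.1.erase b ⊆ J₀ := fun _ hz =>
  have ⟨hzb, hzU⟩ := Finset.mem_erase.mp hz
  not_not.mp fun hzJ => hzb (eq_of_supIrred hU hzU hb hzJ hbJ)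

theorem connIn_erase_of_supIrred (hU : SupIrred U) {b : Fin n} (hb : b ∈ U.1)
    (hbJ : b ∉ J₀) : ConnIn (pathGraph n) (U.1.erase b) := by
  rw [connIn_pathGraph_iff, Finset.coe_erase]
  exact (ordConnected_of_supIrred hU).diff_singleton
    (mem_upperBounds_or_mem_lowerBounds_of_supIrred hU hb hbJ)

theorem supIrred_of_subset_uIcc {b e : Fin n} (he : e ∈ U.1)
    (huniq : ∀ z ∈ U.1, z ∉ J₀ → z = b) (hsub : (U.1 : Set (Fin n)) ⊆ Set.uIcc e b) :
    SupIrred U := by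
  have hfull : ∀ D : CrossSection (pathGraph n) J₀, D ≤ U → e ∈ D.1 → D = U := by
    intro D hDU heD
    obtain ⟨b', heb', hb'J⟩ := D.2 e heD
    have hebD := ReachIn.uIcc_subset heD heb'
    obtain rfl : b' = b := huniq b' (hDU (hebD Set.right_mem_uIcc)) hb'J
    exact le_antisymm hDU (hsub.trans hebD)
  refine ⟨fun hmin => ?_, fun B C hBC => ?_⟩
  · obtain rfl := isMin_iff_eq_bot.mp hmin
    exact Finset.notMem_empty e he
  · rcases Finset.mem_union.mp (show e ∈ (B ⊔ C).1 from hBC ▸ he) with h | h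
    · exact Or.inl (hfull B (hBC ▸ le_sup_left) h)
    · exact Or.inr (hfull C (hBC ▸ le_sup_right) h)

theorem supIrred_of_eq_union {A : Finset (Fin n)} {b : Fin n} (hbJ : b ∉ J₀) (hAJ : A ⊆ J₀)
    (hA : A.Nonempty) (hconn : ConnIn (pathGraph n) A) (hUA : U.1 = A ∪ {b}) :
    SupIrred U := by
  obtain ⟨e, heA, hAe⟩ := Finset.exists_mem_subset_uIcc_of_notMem hA
    (connIn_pathGraph_iff.mp hconn) fun hbA => hbJ (hAJ hbA)
  refine supIrred_of_subset_uIcc (b := b) (hUA ▸ Finset.mem_union_left _ heA)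
    (fun z hz hzJ => ?_) ?_
  · rw [hUA, Finset.mem_union] at hz
    exact Finset.mem_singleton.mp (hz.resolve_left fun hzA => hzJ (hAJ hzA))
  · rw [hUA, Finset.coe_union, Finset.coe_singleton]
    exact Set.union_subset hAe (Set.singleton_subset_iff.mpr Set.right_mem_uIcc)

end CrossSection

open CrossSection

theorem stmt_4_general (n : ℕ) (J₀ : Finset (Fin n))
    (U : CrossSection (pathGraph n) J₀) :
    SupIrred U ↔
      ((∃ β : Fin n, β ∉ J₀ ∧ U.1 = {β}) ∨
       (∃ (β : Fin n) (A : Finset (Fin n)), β ∉ J₀ ∧ A ⊆ J₀ ∧ A.Nonempty ∧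
          ConnIn (pathGraph n) A ∧ (∃ α ∈ A, (pathGraph n).Adj α β) ∧
          U.1 = A ∪ {β})) := by
  refine ⟨fun hU => ?_, ?_⟩
  · obtain ⟨a, ha⟩ : U.1.Nonempty :=
      Finset.nonempty_iff_ne_empty.mpr fun h => hU.1 (isMin_iff_eq_bot.mpr (Subtype.ext h))
    obtain ⟨β, haβ, hβJ⟩ := U.2 a ha
    have hβ : β ∈ U.1 := ReachIn.uIcc_subset ha haβ Set.right_mem_uIcc
    rcases (U.1.erase β).eq_empty_or_nonempty with hA | ⟨a', ha'⟩
    · exact Or.inl ⟨β, hβJ, ((Finset.erase_eq_empty_iff _ _).mp hA).resolve_left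
        (Finset.ne_empty_of_mem hβ)⟩
    obtain ⟨ha'β, ha'U⟩ := Finset.mem_erase.mp ha'
    refine Or.inr ⟨β, U.1.erase β, hβJ, erase_subset_of_supIrred hU hβ hβJ, ⟨a', ha'⟩,
      connIn_erase_of_supIrred hU hβ hβJ,
      exists_mem_erase_adj_of_ordConnected (ordConnected_of_supIrred hU) ha'U hβ ha'β, ?_⟩
    rw [Finset.union_comm, ← Finset.insert_eq, Finset.insert_erase hβ]
  · rintro (⟨β, -, hUβ⟩ | ⟨β, A, hβJ, hAJ, hA, hconn, -, hUA⟩)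
    · exact supIrred_of_subset_uIcc (b := β) (hUβ ▸ Finset.mem_singleton_self β)
        (fun _ hz _ => Finset.mem_singleton.mp (hUβ ▸ hz)) (by simp [hUβ])
    · exact supIrred_of_eq_union hβJ hAJ hA hconn hUA

theorem stmt_4 (n : ℕ) (hn : 1 ≤ n) (J₀ : Finset (Fin n))
    (U : CrossSection (pathGraph n) J₀) (hU : U.1.Nonempty) :
    SupIrred U ↔
      ((∃ β : Fin n, β ∉ J₀ ∧ U.1 = {β}) ∨
       (∃ (β : Fin n) (A : Finset (Fin n)), β ∉ J₀ ∧ A ⊆ J₀ ∧ A.Nonempty ∧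
          ConnIn (pathGraph n) A ∧ (∃ α ∈ A, (pathGraph n).Adj α β) ∧
          U.1 = A ∪ {β})) :=
  stmt_4_general n J₀ U
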